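/- arXiv:2410.24088 — 2 statements merged into one kernel-verified Lean document; each statement's English description precedes it below -/
import Mathlib

section
/- Let F ∈ ℂ_p[X] be a nonzero polynomial, α a root of F with |α|_p = 1, and ζ ∈ ℂ_p a root of unity with F(ζ) ≠ 0. Then |ζ - α|_p ≥ |F(ζ)|_p / |F|_p. -/
/-!
Since `F(α) = 0`, we have `F(ζ) = F(ζ) - F(α)`, and on the closed unit ball of an ultrametric
field every polynomial is Lipschitz with constant its Gauss norm: each `ζ ^ i - α ^ i` is
`ζ - α` times a sum of monomials of norm at most one.
-/

/-- The `p`-adic Gauss norm of a polynomial: the maximum of the norms of its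
coefficients. -/
noncomputable def gaussNorm {K : Type*} [NontriviallyNormedField K] (F : Polynomial K) : ℝ :=
  ((F.support.sup fun i => ‖F.coeff i‖₊ : NNReal) : ℝ)

open Polynomial

section GaussNorm

variable {K : Type*} [NontriviallyNormedField K]

lemma gaussNorm_nonneg (F : K[X]) : 0 ≤ gaussNorm F := NNReal.coe_nonneg _

lemma norm_coeff_le_gaussNorm (F : K[X]) (i : ℕ) : ‖F.coeff i‖ ≤ gaussNorm F := by
  by_cases hi : F.coeff i = 0
  · simpa [hi] using gaussNorm_nonneg F
  · exact NNReal.coe_le_coe.mpr <|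
      Finset.le_sup (f := fun i => ‖F.coeff i‖₊) (mem_support_iff.mpr hi)

end GaussNorm

section Ultrametric

variable {K : Type*}

lemma IsUltrametricDist.norm_pow_sub_pow_le [NormedField K] [IsUltrametricDist K] {x y : K}
    (hx : ‖x‖ ≤ 1) (hy : ‖y‖ ≤ 1) (n : ℕ) : ‖x ^ n - y ^ n‖ ≤ ‖x - y‖ := by
  have hsum : ‖∑ j ∈ Finset.range n, x ^ j * y ^ (n - 1 - j)‖ ≤ 1 :=
    IsUltrametricDist.norm_sum_le_of_forall_le_of_nonneg zero_le_one fun j _ => by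
      rw [norm_mul, norm_pow, norm_pow]
      exact mul_le_one₀ (pow_le_one₀ (norm_nonneg x) hx) (by positivity)
        (pow_le_one₀ (norm_nonneg y) hy)
  calc ‖x ^ n - y ^ n‖ = ‖∑ j ∈ Finset.range n, x ^ j * y ^ (n - 1 - j)‖ * ‖x - y‖ := by
        rw [← geom_sum₂_mul, norm_mul]
    _ ≤ ‖x - y‖ := mul_le_of_le_one_left (norm_nonneg _) hsum

lemma IsUltrametricDist.norm_eval_sub_eval_le [NontriviallyNormedField K] [IsUltrametricDist K]
    (F : K[X]) {x y : K} (hx : ‖x‖ ≤ 1) (hy : ‖y‖ ≤ 1) :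
    ‖F.eval x - F.eval y‖ ≤ gaussNorm F * ‖x - y‖ := by
  rw [eval_eq_sum_range, eval_eq_sum_range, ← Finset.sum_sub_distrib]
  refine IsUltrametricDist.norm_sum_le_of_forall_le_of_nonneg
    (mul_nonneg (gaussNorm_nonneg F) (norm_nonneg _)) fun i _ => ?_
  rw [← mul_sub, norm_mul]
  exact mul_le_mul (norm_coeff_le_gaussNorm F i) (norm_pow_sub_pow_le hx hy i)
    (norm_nonneg _) (gaussNorm_nonneg F)

end Ultrametric

theorem stmt3_general
    {K : Type*} [NontriviallyNormedField K] [IsUltrametricDist K]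
    (F : Polynomial K) (α : K) (hroot : F.eval α = 0) (hα : ‖α‖ = 1)
    (ζ : K) (hζ : IsOfFinOrder ζ) :
    ‖F.eval ζ‖ / gaussNorm F ≤ ‖ζ - α‖ := by
  refine div_le_of_le_mul₀ (gaussNorm_nonneg F) (norm_nonneg _) ?_
  calc ‖F.eval ζ‖ = ‖F.eval ζ - F.eval α‖ := by rw [hroot, sub_zero]
    _ ≤ gaussNorm F * ‖ζ - α‖ :=
      IsUltrametricDist.norm_eval_sub_eval_le F hζ.norm_eq_one.le hα.le
    _ = ‖ζ - α‖ * gaussNorm F := mul_comm _ _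

/-- Let `F ∈ ℂ_p[X]` be nonzero, `α` a root of `F` with `|α|_p = 1`, and `ζ` a root of
unity with `F(ζ) ≠ 0`. Then `|ζ - α|_p ≥ |F(ζ)|_p / |F|_p`. -/
theorem stmt3 {p : ℕ} (hp : p.Prime)
    {K : Type*} [NontriviallyNormedField K] [IsUltrametricDist K] [IsAlgClosed K]
    [CompleteSpace K] (hpnorm : ‖(p : K)‖ = (p : ℝ)⁻¹)
    (F : Polynomial K) (hF : F ≠ 0) (α : K) (hroot : F.eval α = 0) (hα : ‖α‖ = 1)
    (ζ : K) (hζ : IsOfFinOrder ζ) (hFζ : F.eval ζ ≠ 0) :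
    ‖F.eval ζ‖ / gaussNorm F ≤ ‖ζ - α‖ :=
  stmt3_general F α hroot hα ζ hζ
end

section
/- Let p be a prime and F ∈ ℂ_p[X] a nonzero polynomial. There are at most deg(F) roots of unity ζ of order prime to p such that |F(ζ)|_p ≠ |F|_p. -/
theorem gaussNorm_eq_supNorm {K : Type*} [NontriviallyNormedField K] (F : Polynomial K) :
    gaussNorm F = F.supNorm := by
  refine le_antisymm ?_ ?_
  · rw [gaussNorm, ← NNReal.coe_mk _ F.supNorm_nonneg, NNReal.coe_le_coe]
    exact Finset.sup_le fun i _ => F.le_supNorm i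
  · obtain ⟨i, hi⟩ := F.exists_eq_supNorm
    rw [hi, ← coe_nnnorm, gaussNorm, NNReal.coe_le_coe]
    by_cases h : i ∈ F.support
    · exact Finset.le_sup (f := fun i => ‖F.coeff i‖₊) h
    · simp [Polynomial.notMem_support_iff.mp h]

section

open Polynomial IsUltrametricDist

variable {K : Type*} [NormedField K]

def rootsOfUnityPrimeTo (p : ℕ) (M : Type*) [Monoid M] : Set M :=
  {ζ | ∃ m : ℕ, 0 < m ∧ m.Coprime p ∧ ζ ^ m = 1}

theorem div_mem_rootsOfUnityPrimeTo {p : ℕ} {M : Type*} [DivisionCommMonoid M] {ζ η : M}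
    (hζ : ζ ∈ rootsOfUnityPrimeTo p M) (hη : η ∈ rootsOfUnityPrimeTo p M) :
    ζ / η ∈ rootsOfUnityPrimeTo p M := by
  obtain ⟨m, hm, hmp, hζm⟩ := hζ
  obtain ⟨n, hn, hnp, hηn⟩ := hη
  refine ⟨m * n, Nat.mul_pos hm hn, hmp.mul_left hnp, ?_⟩
  rw [div_pow, pow_mul, hζm, pow_mul', hηn, one_pow, one_pow, div_one]

theorem norm_eq_one_of_mem_rootsOfUnityPrimeTo {p : ℕ} {ζ : K}
    (hζ : ζ ∈ rootsOfUnityPrimeTo p K) : ‖ζ‖ = 1 :=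
  let ⟨m, hm, _, hζm⟩ := hζ
  (isOfFinOrder_iff_pow_eq_one.2 ⟨m, hm, hζm⟩).norm_eq_one

def exceptionalRootsOfUnity (p : ℕ) (F : K[X]) : Set K :=
  {ζ | ζ ∈ rootsOfUnityPrimeTo p K ∧ ‖F.eval ζ‖ ≠ F.supNorm}

theorem exceptionalRootsOfUnity_C (p : ℕ) (a : K) : exceptionalRootsOfUnity p (C a) = ∅ := by
  simp [exceptionalRootsOfUnity]

section Ultrametric

variable [IsUltrametricDist K]

namespace Polynomial

theorem supNorm_add_le (F G : K[X]) : (F + G).supNorm ≤ max F.supNorm G.supNorm :=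
  isNonarchimedean_gaussNorm _ isNonarchimedean_norm zero_le_one F G

theorem supNorm_mul_le (F G : K[X]) : (F * G).supNorm ≤ F.supNorm * G.supNorm :=
  gaussNorm_mul_le (NormedField.toAbsoluteValue K) isNonarchimedean_norm F G zero_le_one

theorem supNorm_X_sub_C_le_one {a : K} (ha : ‖a‖ ≤ 1) : (X - C a).supNorm ≤ 1 := by
  rw [sub_eq_add_neg, ← C_neg]
  refine (supNorm_add_le _ _).trans (max_le ?_ ?_)
  · rw [supNorm_X]
  · rwa [supNorm_C, norm_neg]

theorem norm_eval_le_supNorm (F : K[X]) {x : K} (hx : ‖x‖ ≤ 1) : ‖F.eval x‖ ≤ F.supNorm := by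
  rw [eval_eq_sum_range]
  refine norm_sum_le_of_forall_le_of_nonneg F.supNorm_nonneg fun i _ => ?_
  rw [norm_mul, norm_pow]
  exact (mul_le_of_le_one_right (norm_nonneg _) (pow_le_one₀ (norm_nonneg x) hx)).trans
    (F.le_supNorm i)

theorem supNorm_le_max_supNorm_divByMonic (F : K[X]) {a : K} (ha : ‖a‖ ≤ 1) :
    F.supNorm ≤ max (F /ₘ (X - C a)).supNorm ‖F.eval a‖ := by
  conv_lhs => rw [← modByMonic_add_div F (X - C a), modByMonic_X_sub_C_eq_C_eval, add_comm]
  refine (supNorm_add_le _ _).trans (max_le_max ?_ supNorm_C.le)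
  calc ((X - C a) * (F /ₘ (X - C a))).supNorm
      ≤ (X - C a).supNorm * (F /ₘ (X - C a)).supNorm := supNorm_mul_le _ _
    _ ≤ (F /ₘ (X - C a)).supNorm :=
      mul_le_of_le_one_left (supNorm_nonneg _) (supNorm_X_sub_C_le_one ha)

end Polynomial

theorem norm_pow_sub_one_le {x : K} (hx : ‖x‖ ≤ 1) (n : ℕ) : ‖x ^ n - 1‖ ≤ ‖x - 1‖ := by
  rw [← mul_geom_sum, norm_mul]
  refine mul_le_of_le_one_right (norm_nonneg _) ?_
  refine norm_sum_le_of_forall_le_of_nonneg zero_le_one fun i _ => ?_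
  rw [norm_pow]
  exact pow_le_one₀ (norm_nonneg x) hx

theorem norm_sub_one_eq_one_of_pow_eq_one {ζ : K} {m : ℕ} (hζ : ζ ^ m = 1)
    (hm : ‖(m : K)‖ = 1) (hζ1 : ζ ≠ 1) : ‖ζ - 1‖ = 1 := by
  have hm0 : m ≠ 0 := by rintro rfl; simp at hm
  have hζnorm : ‖ζ‖ = 1 :=
    (isOfFinOrder_iff_pow_eq_one.2 ⟨m, Nat.pos_of_ne_zero hm0, hζ⟩).norm_eq_one
  refine le_antisymm ?_ ?_
  · rw [sub_eq_add_neg]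
    simpa [hζnorm] using norm_add_le_max ζ (-1)
  have hgeom : ∑ i ∈ Finset.range m, ζ ^ i = 0 := by
    have h := mul_geom_sum ζ m
    rw [hζ, sub_self, mul_eq_zero, sub_eq_zero] at h
    exact h.resolve_left hζ1
  have hsum : ∑ i ∈ Finset.range m, (ζ ^ i - 1) = -(m : K) := by
    rw [Finset.sum_sub_distrib, hgeom, Finset.sum_const, Finset.card_range, nsmul_one, zero_sub]
  calc (1 : ℝ) = ‖∑ i ∈ Finset.range m, (ζ ^ i - 1)‖ := by rw [hsum, norm_neg, hm]
    _ ≤ ‖ζ - 1‖ := norm_sum_le_of_forall_le_of_nonneg (norm_nonneg _)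
        fun i _ => norm_pow_sub_one_le hζnorm.le i

theorem norm_natCast_eq_one_of_coprime {p m : ℕ} (hp : ‖(p : K)‖ < 1) (hmp : m.Coprime p) :
    ‖(m : K)‖ = 1 := by
  refine le_antisymm (norm_natCast_le_one K m) (not_lt.1 fun hm => ?_)
  have hbezout : (m : K) * (m.gcdA p : K) + (p : K) * (m.gcdB p : K) = 1 := by
    have h := congrArg (Int.cast : ℤ → K) (Nat.gcd_eq_gcd_ab m p)
    rw [hmp.gcd_eq_one] at h
    push_cast at h
    exact h.symm
  have hlt : ∀ {n : ℕ} (z : ℤ), ‖(n : K)‖ < 1 → ‖(n : K) * (z : K)‖ < 1 := fun z hn => by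
    rw [norm_mul]
    exact mul_lt_one_of_nonneg_of_lt_one_left (norm_nonneg _) hn (norm_intCast_le_one K z)
  have := (norm_add_le_max _ _).trans_lt (max_lt (hlt (m.gcdA p) hm) (hlt (m.gcdB p) hp))
  rw [hbezout, norm_one] at this
  exact lt_irrefl _ this

theorem norm_sub_eq_one_of_mem_rootsOfUnityPrimeTo {p : ℕ} {ζ η : K}
    (hp : ‖(p : K)‖ < 1) (hζ : ζ ∈ rootsOfUnityPrimeTo p K) (hη : η ∈ rootsOfUnityPrimeTo p K)
    (hne : ζ ≠ η) : ‖ζ - η‖ = 1 := by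
  have hη1 := norm_eq_one_of_mem_rootsOfUnityPrimeTo hη
  have hη0 : η ≠ 0 := norm_ne_zero_iff.1 (hη1 ▸ one_ne_zero)
  obtain ⟨m, -, hmp, hm⟩ := div_mem_rootsOfUnityPrimeTo hζ hη
  have hfactor : ζ - η = η * (ζ / η - 1) := by field_simp
  rw [hfactor, norm_mul, hη1, one_mul]
  exact norm_sub_one_eq_one_of_pow_eq_one hm (norm_natCast_eq_one_of_coprime hp hmp)
    fun h => hne ((div_eq_one_iff_eq hη0).1 h)

theorem exceptionalRootsOfUnity_subset_insert {p : ℕ} (hp : ‖(p : K)‖ < 1) {F : K[X]} {a : K}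
    (ha : a ∈ exceptionalRootsOfUnity p F) :
    exceptionalRootsOfUnity p F ⊆ insert a (exceptionalRootsOfUnity p (F /ₘ (X - C a))) := by
  obtain ⟨haμ, hFa⟩ := ha
  have ha1 := norm_eq_one_of_mem_rootsOfUnityPrimeTo haμ
  have hFa_lt : ‖F.eval a‖ < F.supNorm := (F.norm_eval_le_supNorm ha1.le).lt_of_ne hFa
  have hFQ : F.supNorm ≤ (F /ₘ (X - C a)).supNorm :=
    (le_max_iff.1 (F.supNorm_le_max_supNorm_divByMonic ha1.le)).resolve_right hFa_lt.not_ge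
  rintro ζ ⟨hζμ, hFζ⟩
  rcases eq_or_ne ζ a with rfl | hζa
  · exact Set.mem_insert _ _
  refine Set.mem_insert_of_mem _ ⟨hζμ, ne_of_lt ?_⟩
  have hFζ_lt : ‖F.eval ζ‖ < F.supNorm :=
    (F.norm_eval_le_supNorm (norm_eq_one_of_mem_rootsOfUnityPrimeTo hζμ).le).lt_of_ne hFζ
  have heval : F.eval ζ - F.eval a = (ζ - a) * (F /ₘ (X - C a)).eval ζ := by
    conv_lhs => rw [← modByMonic_add_div F (X - C a), modByMonic_X_sub_C_eq_C_eval]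
    simp
  calc ‖(F /ₘ (X - C a)).eval ζ‖ = ‖F.eval ζ - F.eval a‖ := by
        rw [heval, norm_mul, norm_sub_eq_one_of_mem_rootsOfUnityPrimeTo hp hζμ haμ hζa, one_mul]
    _ ≤ max ‖F.eval ζ‖ ‖F.eval a‖ := by
        rw [sub_eq_add_neg, ← norm_neg (F.eval a)]
        exact norm_add_le_max _ _
    _ < F.supNorm := max_lt hFζ_lt hFa_lt
    _ ≤ (F /ₘ (X - C a)).supNorm := hFQ

theorem exceptionalRootsOfUnity_finite_and_ncard_le {p : ℕ} (hp : ‖(p : K)‖ < 1) (F : K[X]) :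
    (exceptionalRootsOfUnity p F).Finite ∧
      (exceptionalRootsOfUnity p F).ncard ≤ F.natDegree := by
  induction hn : F.natDegree generalizing F with
  | zero =>
    rw [eq_C_of_natDegree_eq_zero hn, exceptionalRootsOfUnity_C]
    simp
  | succ n ih =>
    rcases (exceptionalRootsOfUnity p F).eq_empty_or_nonempty with hempty | ⟨a, ha⟩
    · simp [hempty]
    have hQ : (F /ₘ (X - C a)).natDegree = n := by
      rw [natDegree_divByMonic F (monic_X_sub_C a), natDegree_X_sub_C, hn, Nat.add_sub_cancel]
    obtain ⟨hfin, hcard⟩ := ih _ hQ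
    have hsub := exceptionalRootsOfUnity_subset_insert hp ha
    refine ⟨(hfin.insert a).subset hsub, ?_⟩
    calc (exceptionalRootsOfUnity p F).ncard
        ≤ (insert a (exceptionalRootsOfUnity p (F /ₘ (X - C a)))).ncard :=
          Set.ncard_le_ncard hsub (hfin.insert a)
      _ ≤ n + 1 := (Set.ncard_insert_le _ _).trans (Nat.add_le_add_right hcard 1)

end Ultrametric

end

theorem stmt5_general {p : ℕ} (hp : p.Prime)
    {K : Type*} [NontriviallyNormedField K] [IsUltrametricDist K]
    (hpnorm : ‖(p : K)‖ = (p : ℝ)⁻¹)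
    (F : Polynomial K) :
    {ζ : K | (∃ m : ℕ, 0 < m ∧ Nat.Coprime m p ∧ ζ ^ m = 1) ∧
        ‖F.eval ζ‖ ≠ gaussNorm F}.Finite ∧
      {ζ : K | (∃ m : ℕ, 0 < m ∧ Nat.Coprime m p ∧ ζ ^ m = 1) ∧
        ‖F.eval ζ‖ ≠ gaussNorm F}.ncard ≤ F.natDegree := by
  have hp_lt_one : ‖(p : K)‖ < 1 := by
    rw [hpnorm]
    exact inv_lt_one_of_one_lt₀ (by exact_mod_cast hp.one_lt)
  simp_rw [gaussNorm_eq_supNorm]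
  exact exceptionalRootsOfUnity_finite_and_ncard_le hp_lt_one F

/-- Let `p` be a prime and `F ∈ ℂ_p[X]` nonzero. There are at most `deg F` roots of
unity `ζ` of order prime to `p` such that `|F(ζ)|_p ≠ |F|_p`. -/
theorem stmt5 {p : ℕ} (hp : p.Prime)
    {K : Type*} [NontriviallyNormedField K] [IsUltrametricDist K] [IsAlgClosed K]
    [CompleteSpace K] (hpnorm : ‖(p : K)‖ = (p : ℝ)⁻¹)
    (F : Polynomial K) (hF : F ≠ 0) :
    {ζ : K | (∃ m : ℕ, 0 < m ∧ Nat.Coprime m p ∧ ζ ^ m = 1) ∧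
        ‖F.eval ζ‖ ≠ gaussNorm F}.Finite ∧
      {ζ : K | (∃ m : ℕ, 0 < m ∧ Nat.Coprime m p ∧ ζ ^ m = 1) ∧
        ‖F.eval ζ‖ ≠ gaussNorm F}.ncard ≤ F.natDegree :=
  stmt5_general hp hpnorm F
end
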